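/- arXiv:1905.11914 — 5 statements merged into one kernel-verified Lean document; each statement's English description precedes it below -/
import Mathlib

section
/- Fix n ≥ 2 and consider the set F_n = {(i, i, (i+1) mod n) : i ∈ Z/nZ} of 'forbidden triples' (together with all their permutations as unordered cycles) on the index set Z/nZ. If π is a permutation of Z/nZ such that a triple (i,j,k) is forbidden if and only if (π(i),π(j),π(k)) is forbidden, then π is of the form π(s) = x + s mod n for some fixed x ∈ Z/nZ. Consequently the group of such permutations is isomorphic to Z/nZ. -/
/-! Comparing multiplicities, `{a, a, b} = {j, j, k}` forces `a = j` and `b = k`. Applied to the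
image `{π i, π i, π (i + 1)}` of the forbidden triple `{i, i, i + 1}`, this gives
`π (i + 1) = π i + 1`, so `π` is the translation by `π 0`. Conversely every translation preserves
the forbidden triples, so the group is the image of the injective homomorphism `x ↦ (x + ·)`. -/

/-- A triple `(a,b,c)` of elements of `ZMod n` is a forbidden cycle of type `d`
if, as an unordered multiset, it equals `{i, i, i + d}` for some `i`. -/
def Forb (n : ℕ) (d : ZMod n) (a b c : ZMod n) : Prop :=
  ∃ i : ZMod n, ({a, b, c} : Multiset (ZMod n)) = {i, i, i + d}

/-- The group of permutations of `ZMod n` preserving the forbidden cycles of type `d`. -/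
def autSubgroup (n : ℕ) (d : ZMod n) : Subgroup (Equiv.Perm (ZMod n)) where
  carrier := {π | ∀ a b c : ZMod n, Forb n d a b c ↔ Forb n d (π a) (π b) (π c)}
  one_mem' := by intro a b c; rfl
  mul_mem' := by
    intro π σ hπ hσ a b c
    exact (hσ a b c).trans (hπ _ _ _)
  inv_mem' := by
    intro π hπ a b c
    constructor
    · intro h
      have := (hπ (π⁻¹ a) (π⁻¹ b) (π⁻¹ c)).mpr
      simp only [Equiv.Perm.coe_inv, Equiv.apply_symm_apply] at this
      exact this h
    · intro h
      have := (hπ (π⁻¹ a) (π⁻¹ b) (π⁻¹ c)).mp h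
      simpa using this

theorem Multiset.eq_and_eq_of_cons_cons_eq {α : Type*} {a b j k : α}
    (h : ({a, a, b} : Multiset α) = {j, j, k}) : a = j ∧ b = k := by
  classical
  have haj : a = j := by
    by_contra hne
    -- `a` occurs twice on the left but at most once (as `k`) on the right
    have hcount := congrArg (Multiset.count a) h
    simp only [Multiset.insert_eq_cons, Multiset.count_cons_self, Multiset.count_cons_of_ne hne,
      Multiset.count_singleton] at hcount
    split_ifs at hcount <;> omega
  subst haj
  simpa using h

theorem Forb.add_left {n : ℕ} {d a b c : ZMod n} (x : ZMod n) (h : Forb n d a b c) :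
    Forb n d (x + a) (x + b) (x + c) := by
  obtain ⟨i, hi⟩ := h
  refine ⟨x + i, ?_⟩
  simpa [add_assoc] using congrArg (Multiset.map (x + ·)) hi

theorem constVAdd_mem_autSubgroup (n : ℕ) (d x : ZMod n) :
    Equiv.constVAdd (ZMod n) x ∈ autSubgroup n d := by
  intro a b c
  refine ⟨Forb.add_left x, fun h => ?_⟩
  simpa using h.add_left (-x)

theorem map_add_one_of_mem_autSubgroup {n : ℕ} {π : Equiv.Perm (ZMod n)}
    (hπ : π ∈ autSubgroup n 1) (i : ZMod n) : π (i + 1) = π i + 1 := by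
  obtain ⟨j, hj⟩ := (hπ i i (i + 1)).mp ⟨i, rfl⟩
  obtain ⟨rfl, h⟩ := Multiset.eq_and_eq_of_cons_cons_eq hj
  exact h

theorem ZMod.eq_add_of_map_add_one {n : ℕ} {f : ZMod n → ZMod n}
    (hf : ∀ i, f (i + 1) = f i + 1) (s : ZMod n) : f s = f 0 + s := by
  -- integer induction, since `ZMod 0 = ℤ`
  obtain ⟨k, rfl⟩ := ZMod.intCast_surjective s
  induction k using Int.induction_on with
  | zero => simp
  | succ i ih => push_cast at ih ⊢; rw [hf, ih, add_assoc]
  | pred i ih =>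
    have h := hf ((-i : ℤ) - 1 : ZMod n)
    push_cast at ih h ⊢
    rw [sub_add_cancel, ih] at h
    rw [eq_sub_of_add_eq h.symm]
    abel

theorem constVAddHom_injective (G : Type*) [AddGroup G] :
    Function.Injective (Equiv.constVAddHom G G) := fun x y h => by
  simpa [Equiv.constVAddHom] using congrArg (· 0) h

theorem autSubgroup_one_eq_range (n : ℕ) :
    autSubgroup n 1 = (Equiv.constVAddHom (ZMod n) (ZMod n)).range := by
  ext π
  refine ⟨fun hπ => ⟨Multiplicative.ofAdd (π 0), ?_⟩, ?_⟩
  · ext s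
    exact (ZMod.eq_add_of_map_add_one (map_add_one_of_mem_autSubgroup hπ) s).symm
  · rintro ⟨x, rfl⟩
    exact constVAdd_mem_autSubgroup n 1 x.toAdd

theorem stmt_2_general (n : ℕ) :
    (∀ π : Equiv.Perm (ZMod n), π ∈ autSubgroup n 1 →
      ∃ x : ZMod n, ∀ s : ZMod n, π s = x + s) ∧
    Nonempty (autSubgroup n 1 ≃* Multiplicative (ZMod n)) :=
  ⟨fun _ hπ => ⟨_, ZMod.eq_add_of_map_add_one (map_add_one_of_mem_autSubgroup hπ)⟩,
    ⟨(MulEquiv.subgroupCongr (autSubgroup_one_eq_range n)).trans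
      (MonoidHom.ofInjective (constVAddHom_injective (ZMod n))).symm⟩⟩

theorem stmt_2 (n : ℕ) (hn : 2 ≤ n) :
    (∀ π : Equiv.Perm (ZMod n), π ∈ autSubgroup n 1 →
      ∃ x : ZMod n, ∀ s : ZMod n, π s = x + s) ∧
    Nonempty (autSubgroup n 1 ≃* Multiplicative (ZMod n)) :=
  stmt_2_general n
end

section
/- Let n ≥ 2, j ∈ Z/nZ with gcd(j, n) > 1, and D_j (resp. D_1) the automorphism group of the forbidden-cycle structure of type j (resp. type 1) on Z/nZ, i.e., the group of permutations of Z/nZ preserving forbidden cycles. Since every non-identity element of D_1 is fixed-point-free while D_j contains a non-identity permutation with a fixed point, there is no isomorphism of the two combinatorial structures; in particular, the atom structures A_n([i,i,i+j]) and A_n([i,i,i+1]) are not isomorphic. -/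
lemma trip_eq {α : Type*} [DecidableEq α] {x y i z : α}
    (h : ({x, x, y} : Multiset α) = {i, i, z}) (hz : z ≠ i) : x = i ∧ y = z := by
  have hx : x = i := by
    by_contra hxi
    have hc := congrArg (Multiset.count i) h
    have h1 : ¬ i = x := fun h => hxi h.symm
    have h2 : ¬ i = z := fun h => hz h.symm
    simp [Multiset.insert_eq_cons, Multiset.count_cons, Multiset.count_singleton, h1, h2] at hc
    split_ifs at hc <;> omega
  subst hx
  refine ⟨rfl, ?_⟩
  have h' := h
  rw [Multiset.insert_eq_cons, Multiset.insert_eq_cons,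
      Multiset.insert_eq_cons, Multiset.insert_eq_cons,
      Multiset.cons_inj_right, Multiset.cons_inj_right] at h'
  exact Multiset.singleton_inj.mp h'

theorem stmt_5 (n j : ℕ) (hn : 2 ≤ n) (hj : 1 < Nat.gcd j n) :
    ¬ ∃ e : Equiv (ZMod n) (ZMod n),
        ∀ a b c : ZMod n,
          Forb n (j : ZMod n) a b c ↔ Forb n 1 (e a) (e b) (e c) := by
  rintro ⟨e, he⟩
  haveI : NeZero n := ⟨by omega⟩
  have hone : (1 : ZMod n) ≠ 0 := by
    have h1 : ((1 : ℕ) : ZMod n) ≠ 0 := by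
      rw [Ne, ZMod.natCast_eq_zero_iff]
      exact fun h => by have := Nat.le_of_dvd one_pos h; omega
    simpa using h1
  -- step: e (a + j) = e a + 1
  have key : ∀ a : ZMod n, e (a + (j : ZMod n)) = e a + 1 := by
    intro a
    have hf : Forb n (j : ZMod n) a a (a + (j : ZMod n)) := ⟨a, rfl⟩
    obtain ⟨i, hi⟩ := (he a a (a + (j : ZMod n))).mp hf
    have hz : i + 1 ≠ i := by
      intro h
      exact hone (by linear_combination h - (by ring : i + 1 = 1 + i) + (by ring : (1:ZMod n) + i = i + 1))
    obtain ⟨h1, h2⟩ := trip_eq hi hz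
    rw [h2, h1]
  -- iterate
  have iter : ∀ (k : ℕ) (a : ZMod n), e (a + (k * j : ℕ)) = e a + (k : ZMod n) := by
    intro k
    induction k with
    | zero => simp
    | succ m ih =>
      intro a
      have : ((m + 1) * j : ℕ) = (m * j + j : ℕ) := by ring
      rw [this]
      push_cast
      have := key (a + (m * j : ℕ))
      push_cast at ih ⊢
      rw [show a + ((m : ZMod n) * j + j) = (a + (m : ZMod n) * j) + j by ring,
        key, ih a]
      ring
  set g := Nat.gcd j n with hg
  set m := n / g with hm
  have hgn : g ∣ n := Nat.gcd_dvd_right j n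
  have hgj : g ∣ j := Nat.gcd_dvd_left j n
  have hnpos : 0 < n := by omega
  have hmpos : 0 < m := Nat.div_pos (Nat.le_of_dvd hnpos hgn) (by omega)
  have hmlt : m < n := Nat.div_lt_self hnpos hj
  have hdvd : n ∣ m * j := by
    obtain ⟨t, ht⟩ := hgj
    refine ⟨t, ?_⟩
    rw [ht, hm, ← Nat.mul_assoc, Nat.div_mul_cancel hgn]
  have hcast : ((m * j : ℕ) : ZMod n) = 0 :=
    (ZMod.natCast_eq_zero_iff _ n).mpr hdvd
  have := iter m 0
  rw [hcast, add_zero] at this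
  have hm0 : ((m : ℕ) : ZMod n) = 0 := by
    have h' : e 0 + 0 = e 0 + (m : ZMod n) := by rw [add_zero]; exact this
    exact (add_left_cancel h').symm
  have := (ZMod.natCast_eq_zero_iff m n).mp hm0
  have := Nat.le_of_dvd hmpos this
  omega
end

section
/- Let p be a prime and n a positive integer with p > n^4 + 5 and n dividing p − 1. Let X_0 be the multiplicative subgroup of F_p^× of order (p−1)/n and X_i = g^i X_0 its cosets for a generator g of F_p^×. Then for all i, j, l in {0,...,n−1}, (X_i + X_j) ∩ X_l ≠ ∅. -/
/-!
Put `a = g^i / g^l` and `b = g^j / g^l`; it suffices to solve `a u^n + b v^n = 1` with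
`u, v ≠ 0`. For a character `χ` of order `n`, `∑_{k<n} χ^k(s)` vanishes unless `s` is a nonzero
`n`-th power, so it is enough that `∑_x (∑_k χ^k(x/a)) (∑_m χ^m((1-x)/b)) ≠ 0`. Expanding, this
sum is `∑_{k,m} χ^k(1/a) χ^m(1/b) J(χ^k, χ^m)`: the term `k = m = 0` is `q - 2`, and each of the
other `n^2 - 1` Jacobi sums has absolute value at most `√q`, which is too small to cancel it once
`q > n^4 + 5`. (Weil's bound for Jacobi sums plays the role of the Alon–Bourgain estimate.)
-/

open Finset

lemma Finset.sum_ne_zero_of_card_erase_mul_lt_norm {ι E : Type*} [DecidableEq ι]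
    [SeminormedAddCommGroup E] {s : Finset ι} {i₀ : ι} (hi₀ : i₀ ∈ s) {f : ι → E} {B : ℝ}
    (hB : ∀ i ∈ s, i ≠ i₀ → ‖f i‖ ≤ B) (h : (#(s.erase i₀) : ℝ) * B < ‖f i₀‖) :
    ∑ i ∈ s, f i ≠ 0 := by
  intro h0
  rw [← add_sum_erase s f hi₀, add_eq_zero_iff_eq_neg] at h0
  have : ‖f i₀‖ ≤ #(s.erase i₀) * B := by
    rw [h0, norm_neg, ← nsmul_eq_mul, ← sum_const]
    exact norm_sum_le_of_le _ fun i hi => hB i (mem_of_mem_erase hi) (ne_of_mem_erase hi)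
  linarith

lemma sq_sub_one_mul_sqrt_lt_sub_two (n : ℕ) {q : ℝ} (hq : n ^ 4 + 5 < q) :
    ((n : ℝ) ^ 2 - 1) * √q < q - 2 := by
  have hq0 : 0 ≤ q := by linarith [pow_nonneg (Nat.cast_nonneg n : (0 : ℝ) ≤ n) 4]
  have hnq : (n : ℝ) ^ 2 ≤ √q := (Real.le_sqrt (by positivity) hq0).2 (by linarith)
  have htwo : 2 < √q := (Real.lt_sqrt zero_le_two).2 (by nlinarith)
  have hsq : √q ^ 2 = q := Real.sq_sqrt hq0
  nlinarith [mul_nonneg (Real.sqrt_nonneg q) (sub_nonneg.2 hnq)]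

namespace FiniteField

variable {F : Type*} [Field F] [Fintype F]

lemma exists_pow_eq_of_orderOf_eq {g u : F} (hg : orderOf g = Fintype.card F - 1)
    (hu : u ≠ 0) : ∃ a : ℕ, g ^ a = u := by
  have : NeZero (orderOf g) := ⟨by rw [hg]; have := Fintype.one_lt_card (α := F); omega⟩
  obtain ⟨a, -, ha⟩ := (IsPrimitiveRoot.orderOf g).eq_pow_of_pow_eq_one
    (by rw [hg]; exact pow_card_sub_one_eq_one u hu)
  exact ⟨a, ha⟩

end FiniteField

namespace MulChar

variable {F : Type*} [Field F] [Fintype F]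

lemma norm_apply_eq_one (χ : MulChar F ℂ) {a : F} (ha : a ≠ 0) : ‖χ a‖ = 1 :=
  Complex.norm_eq_one_of_pow_eq_one
    (by rw [← map_pow, FiniteField.pow_card_sub_one_eq_one a ha, map_one])
    (by have := Fintype.one_lt_card (α := F); omega)

lemma exists_pow_orderOf_eq_of_apply_eq_one {R : Type*} [CommMonoidWithZero R]
    {χ : MulChar F R} {s : F} (hs : s ≠ 0) (h : χ s = 1) : ∃ u, u ^ orderOf χ = s := by
  obtain ⟨γ, hγ⟩ := IsCyclic.exists_monoid_generator (α := Fˣ)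
  have hord : orderOf (χ γ) = orderOf χ := orderOf_eq_orderOf_iff.2 fun k => by
    rw [eq_iff (fun x => mem_powers_iff_mem_zpowers.1 (hγ x)) (χ ^ k) 1, pow_apply_coe,
      one_apply_coe]
  obtain ⟨m, hm⟩ := hγ (Units.mk0 s hs)
  have hs : s = (γ : F) ^ m := by
    rw [← Units.val_pow_eq_pow_val, show γ ^ m = _ from hm, Units.val_mk0]
  rw [hs, map_pow, ← orderOf_dvd_iff_pow_eq_one, hord] at h
  obtain ⟨k, rfl⟩ := h
  exact ⟨(γ : F) ^ k, by rw [hs, ← pow_mul, mul_comm]⟩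

lemma exists_pow_orderOf_eq_of_sum_pow_apply_ne_zero {R : Type*} [CommRing R] [IsDomain R]
    {χ : MulChar F R} {s : F} (h : ∑ k ∈ range (orderOf χ), (χ ^ k) s ≠ 0) :
    ∃ u, u ≠ 0 ∧ u ^ orderOf χ = s := by
  have hs : s ≠ 0 := by
    rintro rfl
    simp only [MulChar.map_zero, sum_const_zero, ne_eq, not_true_eq_false] at h
  have hχs : χ s = 1 := by
    lift s to Fˣ using isUnit_iff_ne_zero.2 hs
    simp only [pow_apply_coe] at h
    by_contra hne
    refine h (mul_right_cancel₀ (sub_ne_zero.2 hne) ?_)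
    rw [geom_sum_mul, ← pow_apply_coe, pow_orderOf_eq_one, one_apply_coe, sub_self, zero_mul]
  obtain ⟨u, hu⟩ := exists_pow_orderOf_eq_of_apply_eq_one hs hχs
  exact ⟨u, fun hu0 => hs (by rw [← hu, hu0, zero_pow χ.orderOf_pos.ne']), hu⟩

end MulChar

section JacobiSum

variable {F : Type*} [Field F] [Fintype F]

lemma jacobiSum_inv_inv (χ ψ : MulChar F ℂ) :
    jacobiSum χ⁻¹ ψ⁻¹ = starRingEnd ℂ (jacobiSum χ ψ) := by
  simp only [jacobiSum, map_sum, map_mul, starRingEnd_apply, MulChar.star_apply']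

lemma norm_jacobiSum_eq_sqrt {χ ψ : MulChar F ℂ} (hχ : χ ≠ 1) (hψ : ψ ≠ 1) (hχψ : χ * ψ ≠ 1) :
    ‖jacobiSum χ ψ‖ = √(Fintype.card F) := by
  have hchar : ringChar ℂ ≠ ringChar F := by
    rw [ringChar.eq_zero]
    exact (CharP.char_is_prime F (ringChar F)).ne_zero.symm
  have h := jacobiSum_mul_jacobiSum_inv hchar hχ hψ hχψ
  rw [jacobiSum_inv_inv, Complex.mul_conj, Complex.normSq_eq_norm_sq] at h
  rw [← Real.sqrt_sq (norm_nonneg _)]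
  exact congrArg _ (by exact_mod_cast h)

lemma norm_jacobiSum_le_sqrt {χ ψ : MulChar F ℂ} (h : χ ≠ 1 ∨ ψ ≠ 1) :
    ‖jacobiSum χ ψ‖ ≤ √(Fintype.card F) := by
  have hone : (1 : ℝ) ≤ √(Fintype.card F) :=
    Real.one_le_sqrt.2 (by exact_mod_cast Fintype.card_pos)
  by_cases hχ : χ = 1
  · rw [hχ, jacobiSum_one_nontrivial (h.resolve_left (not_not.2 hχ)), norm_neg, norm_one]
    exact hone
  by_cases hψ : ψ = 1
  · rw [hψ, jacobiSum_comm, jacobiSum_one_nontrivial hχ, norm_neg, norm_one]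
    exact hone
  by_cases hχψ : χ * ψ = 1
  · rw [← inv_eq_of_mul_eq_one_right hχψ, jacobiSum_nontrivial_inv hχ, norm_neg,
      MulChar.norm_apply_eq_one _ (neg_ne_zero.2 one_ne_zero)]
    exact hone
  exact (norm_jacobiSum_eq_sqrt hχ hψ hχψ).le

lemma sum_mul_sum_eq_sum_jacobiSum {R : Type*} [CommRing R] {ι κ : Type*} (s : Finset ι)
    (t : Finset κ) (χ : ι → MulChar F R) (ψ : κ → MulChar F R) (a b : F) :
    ∑ x : F, (∑ i ∈ s, χ i (x * a)) * (∑ j ∈ t, ψ j ((1 - x) * b)) =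
      ∑ i ∈ s, ∑ j ∈ t, χ i a * ψ j b * jacobiSum (χ i) (ψ j) := by
  simp_rw [sum_mul_sum, jacobiSum, mul_sum, map_mul]
  rw [sum_comm]
  refine sum_congr rfl fun i _ => ?_
  rw [sum_comm]
  refine sum_congr rfl fun j _ => sum_congr rfl fun x _ => by ring

lemma sum_range_pow_jacobiSum_ne_zero (χ : MulChar F ℂ) {a b : F} (ha : a ≠ 0) (hb : b ≠ 0)
    (hq : ((orderOf χ : ℝ) ^ 2 - 1) * √(Fintype.card F) < Fintype.card F - 2) :
    ∑ k ∈ range (orderOf χ), ∑ m ∈ range (orderOf χ),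
      (χ ^ k) a * (χ ^ m) b * jacobiSum (χ ^ k) (χ ^ m) ≠ 0 := by
  have hn := χ.orderOf_pos
  have h₀ : ((0, 0) : ℕ × ℕ) ∈ range (orderOf χ) ×ˢ range (orderOf χ) := by simp [hn]
  rw [← sum_product']
  refine sum_ne_zero_of_card_erase_mul_lt_norm h₀ (B := √(Fintype.card F)) ?_ ?_
  · rintro ⟨k, m⟩ hkm hne
    simp only [mem_product, mem_range] at hkm
    rw [norm_mul, norm_mul, MulChar.norm_apply_eq_one _ ha, MulChar.norm_apply_eq_one _ hb,
      one_mul, one_mul]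
    refine norm_jacobiSum_le_sqrt ?_
    by_contra! h
    exact hne (Prod.ext (by_contra fun hk => pow_ne_one_of_lt_orderOf hk hkm.1 h.1)
      (by_contra fun hm => pow_ne_one_of_lt_orderOf hm hkm.2 h.2))
  · have h2 : (2 : ℝ) ≤ Fintype.card F := by exact_mod_cast Fintype.one_lt_card (α := F)
    have hterm : (χ ^ 0) a * (χ ^ 0) b * jacobiSum (χ ^ 0) (χ ^ 0) =
        ((Fintype.card F - 2 : ℝ) : ℂ) := by
      rw [pow_zero, jacobiSum_one_one, MulChar.one_apply (isUnit_iff_ne_zero.2 ha),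
        MulChar.one_apply (isUnit_iff_ne_zero.2 hb)]
      push_cast
      ring
    dsimp only
    rw [hterm, Complex.norm_real, Real.norm_of_nonneg (by linarith), card_erase_of_mem h₀,
      card_product, card_range, Nat.cast_sub (Nat.one_le_iff_ne_zero.2 (by positivity))]
    push_cast
    linarith

end JacobiSum

theorem FiniteField.exists_mul_pow_add_mul_pow_eq_one {F : Type*} [Field F] [Fintype F] {n : ℕ}
    (hn : n ∣ Fintype.card F - 1)
    (hq : ((n : ℝ) ^ 2 - 1) * √(Fintype.card F) < Fintype.card F - 2) {a b : F} (ha : a ≠ 0)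
    (hb : b ≠ 0) : ∃ u v : F, u ≠ 0 ∧ v ≠ 0 ∧ a * u ^ n + b * v ^ n = 1 := by
  have hn0 : n ≠ 0 :=
    ne_zero_of_dvd_ne_zero (by have := Fintype.one_lt_card (α := F); omega) hn
  obtain ⟨χ, rfl⟩ := MulChar.exists_mulChar_orderOf F hn (Complex.isPrimitiveRoot_exp n hn0)
  have hsum : ∑ x : F, (∑ k ∈ range (orderOf χ), (χ ^ k) (x * a⁻¹)) *
      (∑ m ∈ range (orderOf χ), (χ ^ m) ((1 - x) * b⁻¹)) ≠ 0 := by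
    rw [sum_mul_sum_eq_sum_jacobiSum]
    exact sum_range_pow_jacobiSum_ne_zero χ (inv_ne_zero ha) (inv_ne_zero hb) hq
  obtain ⟨x, -, hx⟩ := exists_ne_zero_of_sum_ne_zero hsum
  obtain ⟨u, hu, hux⟩ :=
    MulChar.exists_pow_orderOf_eq_of_sum_pow_apply_ne_zero (left_ne_zero_of_mul hx)
  obtain ⟨v, hv, hvx⟩ :=
    MulChar.exists_pow_orderOf_eq_of_sum_pow_apply_ne_zero (right_ne_zero_of_mul hx)
  refine ⟨u, v, hu, hv, ?_⟩
  rw [hux, hvx]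
  field_simp
  ring

open Pointwise

theorem stmt_7_general (p n : ℕ) (hp : p.Prime) (hpn : p > n ^ 4 + 5)
    (hdvd : n ∣ p - 1)
    (g : ZMod p) (hg : orderOf g = p - 1)
    (X : ℕ → Set (ZMod p))
    (hX : ∀ m, X m = {x : ZMod p | ∃ a : ℕ, x = g ^ (a * n + m)}) :
    ∀ i < n, ∀ j < n, ∀ l < n, ((X i + X j) ∩ X l).Nonempty := by
  have : Fact p.Prime := ⟨hp⟩
  have hg0 : g ≠ 0 := by
    rintro rfl
    simp only [orderOf_zero] at hg
    have := hp.two_le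
    omega
  have hcard : Fintype.card (ZMod p) = p := ZMod.card p
  replace hg : orderOf g = Fintype.card (ZMod p) - 1 := by rwa [hcard]
  have hmem : ∀ m {u : ZMod p}, u ≠ 0 → g ^ m * u ^ n ∈ X m := fun m u hu => by
    obtain ⟨a, rfl⟩ := FiniteField.exists_pow_eq_of_orderOf_eq hg hu
    exact hX m ▸ ⟨a, by ring⟩
  have hq := sq_sub_one_mul_sqrt_lt_sub_two n (q := Fintype.card (ZMod p))
    (by rw [hcard]; exact_mod_cast hpn)
  intro i _ j _ l _
  obtain ⟨u, v, hu, hv, huv⟩ := FiniteField.exists_mul_pow_add_mul_pow_eq_one (by rwa [hcard]) hq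
    (a := g ^ i / g ^ l) (b := g ^ j / g ^ l) (by simp [hg0]) (by simp [hg0])
  refine ⟨g ^ l, ⟨_, hmem i hu, _, hmem j hv, ?_⟩, by simpa using hmem l one_ne_zero⟩
  field_simp at huv
  linear_combination huv

theorem stmt_7 (p n : ℕ) (hp : p.Prime) (hn : 0 < n) (hpn : p > n ^ 4 + 5)
    (hdvd : n ∣ p - 1)
    (g : ZMod p) (hg : orderOf g = p - 1)
    (X : ℕ → Set (ZMod p))
    (hX : ∀ m, X m = {x : ZMod p | ∃ a : ℕ, x = g ^ (a * n + m)}) :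
    ∀ i < n, ∀ j < n, ∀ l < n, ((X i + X j) ∩ X l).Nonempty :=
  stmt_7_general p n hp hpn hdvd g hg X hX
end

section
/- Let q be a prime power and F_q the field with q elements. Suppose X_0, ..., X_{m−1} is a partition of F_q \ {0} into m sets satisfying: (i) −X_i = X_i for each i; (ii) X_i + X_i = F_q \ X_i for each i; (iii) X_i + X_j = F_q \ {0} for i ≠ j. Define binary relations A_i = {(x,y) ∈ F_q × F_q : x − y ∈ X_i}. Then the A_i together with the identity relation Id partition F_q × F_q, and: (I) each A_i is symmetric (A_i^{-1} = A_i); (II) A_i ∘ A_i = (F_q × F_q) \ A_i; (III) for i ≠ j, A_i ∘ A_j = (F_q × F_q) \ Id. -/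
open Pointwise

/-- Relational composition of binary relations on a type. -/
def relComp {α : Type*} (A B : Set (α × α)) : Set (α × α) :=
  {p | ∃ y, (p.1, y) ∈ A ∧ (y, p.2) ∈ B}

lemma comp_key {F : Type*} [Field F] (X Y : Set F) (x z : F) :
    x - z ∈ X + Y ↔ ∃ y, x - y ∈ X ∧ y - z ∈ Y := by
  constructor
  · rintro ⟨a, ha, b, hb, hab⟩
    exact ⟨x - a, by simpa using ha, by rw [show x - a - z = b by linear_combination -hab]; exact hb⟩
  · rintro ⟨y, h1, h2⟩
    exact ⟨x - y, h1, y - z, h2, by ring⟩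

theorem stmt_9 (F : Type*) [Field F] [Fintype F] (m : ℕ)
    (X : Fin m → Set F)
    (hdisj : ∀ i j, i ≠ j → X i ∩ X j = ∅)
    (hcover : (⋃ i, X i) = {x : F | x ≠ 0})
    (hi : ∀ i, -X i = X i)
    (hii : ∀ i, X i + X i = (X i)ᶜ)
    (hiii : ∀ i j, i ≠ j → X i + X j = {x : F | x ≠ 0})
    (A : Fin m → Set (F × F))
    (hA : ∀ i, A i = {p : F × F | p.1 - p.2 ∈ X i})
    (Id : Set (F × F)) (hId : Id = {p : F × F | p.1 = p.2}) :
    -- the `A i` together with `Id` partition `F × F`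
    (∀ i j, i ≠ j → A i ∩ A j = ∅) ∧
    (∀ i, A i ∩ Id = ∅) ∧
    (Id ∪ ⋃ i, A i) = Set.univ ∧
    -- (I) each `A i` is symmetric
    (∀ i, ∀ x y : F, (x, y) ∈ A i ↔ (y, x) ∈ A i) ∧
    -- (II) `A i ∘ A i` is the complement of `A i`
    (∀ i, relComp (A i) (A i) = (A i)ᶜ) ∧
    -- (III) for `i ≠ j`, `A i ∘ A j` is the complement of the identity
    (∀ i j, i ≠ j → relComp (A i) (A j) = Idᶜ) := by
  have hzero : ∀ i, (0 : F) ∉ X i := by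
    intro i h0
    have : (0 : F) ∈ ⋃ i, X i := Set.mem_iUnion.mpr ⟨i, h0⟩
    rw [hcover] at this
    exact this rfl
  refine ⟨?_, ?_, ?_, ?_, ?_, ?_⟩
  · intro i j hij
    ext ⟨x, y⟩
    simp only [hA, Set.mem_inter_iff, Set.mem_setOf_eq, Set.mem_empty_iff_false, iff_false]
    rintro ⟨h1, h2⟩
    have := hdisj i j hij
    exact absurd (Set.mem_inter h1 h2) (by rw [this]; exact id)
  · intro i
    ext ⟨x, y⟩
    simp only [hA, hId, Set.mem_inter_iff, Set.mem_setOf_eq, Set.mem_empty_iff_false, iff_false]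
    rintro ⟨h1, h2⟩
    rw [h2, sub_self] at h1
    exact hzero i h1
  · ext ⟨x, y⟩
    simp only [hA, hId, Set.mem_union, Set.mem_iUnion, Set.mem_setOf_eq, Set.mem_univ, iff_true]
    by_cases h : x = y
    · exact Or.inl h
    · right
      have : x - y ∈ ⋃ i, X i := by
        rw [hcover]; exact sub_ne_zero_of_ne h
      exact Set.mem_iUnion.mp this
  · intro i x y
    simp only [hA, Set.mem_setOf_eq]
    constructor
    · intro h
      have : -(x - y) ∈ -X i := Set.neg_mem_neg.mpr h
      rw [hi] at this
      simpa using this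
    · intro h
      have : -(y - x) ∈ -X i := Set.neg_mem_neg.mpr h
      rw [hi] at this
      simpa using this
  · intro i
    ext ⟨x, z⟩
    simp only [relComp, hA, Set.mem_setOf_eq, Set.mem_compl_iff]
    rw [← comp_key, hii]
    rfl
  · intro i j hij
    ext ⟨x, z⟩
    simp only [relComp, hA, hId, Set.mem_setOf_eq, Set.mem_compl_iff]
    rw [← comp_key, hiii i j hij]
    exact sub_ne_zero
end

section
/- Let q be a prime and A a multiplicative subgroup of F_q^× with |A| = d ≥ √q. If B, C ⊆ F_q satisfy |B|·|C| ≥ q^3/d^2, then there exist x ∈ B and y ∈ C with x + y ∈ A. -/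
/-!
Let `ψ` be a nontrivial additive character of `F_q` and `Â(t) = ∑_{a ∈ A} ψ(t a)`. The number `N`
of pairs `(x, y) ∈ B × C` with `x + y ∈ A` satisfies `q N = ∑_t B̂(t) Ĉ(t) conj (Â(t))`, whose
`t = 0` term is `|A| |B| |C|`. As `A` is a multiplicative group, `|Â|` is constant on each coset
`t A`, so Parseval gives `|Â(t)|² ≤ q - |A|` for `t ≠ 0`; Cauchy–Schwarz and Parseval for `B` and
`C` then bound the other terms by `√((q - |A|) q² |B| |C|)`. For `N = 0` this forces
`|A|² |B| |C| < q³`.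
-/

open Finset ComplexConjugate

section Ring

variable {R : Type*} [CommRing R] {ψ : AddChar R ℂ}

noncomputable def expSum (ψ : AddChar R ℂ) (D : Finset R) (t : R) : ℂ :=
  ∑ x ∈ D, ψ (t * x)

@[simp]
lemma expSum_zero (ψ : AddChar R ℂ) (D : Finset R) : expSum ψ D 0 = #D := by
  simp [expSum]

variable [Fintype R] [DecidableEq R]

lemma sum_mulShift_mul_conj (hψ : ψ.IsPrimitive) (x y : R) :
    ∑ t, ψ (t * x) * conj (ψ (t * y)) = if x = y then (Fintype.card R : ℂ) else 0 := by
  simp_rw [← AddChar.map_neg_eq_conj, ← AddChar.map_add_eq_mul, ← mul_neg, ← mul_add,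
    AddChar.sum_mulShift _ hψ, ← sub_eq_add_neg, sub_eq_zero, Nat.cast_ite, Nat.cast_zero]

lemma sum_norm_expSum_sq (hψ : ψ.IsPrimitive) (D : Finset R) :
    ∑ t, ‖expSum ψ D t‖ ^ 2 = Fintype.card R * #D := by
  have h : ∑ t, (‖expSum ψ D t‖ ^ 2 : ℂ) = Fintype.card R * #D := calc
    _ = ∑ x ∈ D, ∑ y ∈ D, ∑ t, ψ (t * x) * conj (ψ (t * y)) := by
      simp only [← Complex.mul_conj', expSum, map_sum, sum_mul_sum]
      rw [sum_comm]
      exact sum_congr rfl fun _ _ ↦ sum_comm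
    _ = Fintype.card R * #D := by
      simp only [sum_mulShift_mul_conj hψ, sum_ite_eq, sum_ite_mem, inter_self, sum_const,
        nsmul_eq_mul]
      ring
  exact_mod_cast h

lemma sum_norm_expSum_sq_le (hψ : ψ.IsPrimitive) (D s : Finset R) :
    ∑ t ∈ s, ‖expSum ψ D t‖ ^ 2 ≤ Fintype.card R * #D :=
  sum_norm_expSum_sq hψ D ▸
    sum_le_sum_of_subset_of_nonneg (subset_univ s) fun _ _ _ ↦ sq_nonneg _

lemma sum_expSum_mul_expSum_mul_conj (hψ : ψ.IsPrimitive) (A B C : Finset R) :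
    ∑ t, expSum ψ B t * expSum ψ C t * conj (expSum ψ A t) =
      Fintype.card R * #{p ∈ B ×ˢ C | p.1 + p.2 ∈ A} := by
  have h (t : R) : expSum ψ B t * expSum ψ C t * conj (expSum ψ A t) =
      ∑ x ∈ B, ∑ y ∈ C, ∑ a ∈ A, ψ (t * (x + y)) * conj (ψ (t * a)) := by
    rw [expSum, expSum, expSum, map_sum, sum_mul_sum, sum_mul]
    refine sum_congr rfl fun x _ ↦ ?_
    rw [sum_mul]
    refine sum_congr rfl fun y _ ↦ ?_
    rw [mul_sum, mul_add, AddChar.map_add_eq_mul]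
  calc _ = ∑ x ∈ B, ∑ y ∈ C, ∑ a ∈ A, ∑ t, ψ (t * (x + y)) * conj (ψ (t * a)) := by
        simp only [h]
        exact sum_comm.trans (sum_congr rfl fun _ _ ↦
          sum_comm.trans (sum_congr rfl fun _ _ ↦ sum_comm))
    _ = Fintype.card R * #{p ∈ B ×ˢ C | p.1 + p.2 ∈ A} := by
      simp only [sum_mulShift_mul_conj hψ, sum_ite_eq, card_filter, sum_product, Nat.cast_sum,
        Nat.cast_ite, mul_sum, mul_ite, mul_one, mul_zero, Nat.cast_one, Nat.cast_zero]

lemma card_mul_count_sub_eq_sum (hψ : ψ.IsPrimitive) (A B C : Finset R) :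
    (((Fintype.card R : ℝ) * #{p ∈ B ×ˢ C | p.1 + p.2 ∈ A} - #A * (#B * #C) : ℝ) : ℂ) =
      ∑ t ∈ univ.erase 0, expSum ψ B t * expSum ψ C t * conj (expSum ψ A t) := by
  have h := sum_expSum_mul_expSum_mul_conj hψ A B C
  rw [← add_sum_erase _ _ (mem_univ 0)] at h
  push_cast
  rw [← h]
  simp only [expSum_zero, map_natCast]
  ring

end Ring

section Field

variable {F : Type*} [Field F] [DecidableEq F] {ψ : AddChar F ℂ} {A : Finset F}

lemma image_mul_left_eq_of_mem (hA : ∀ a ∈ A, ∀ b ∈ A, a * b ∈ A) (hA0 : 0 ∉ A) {a : F}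
    (ha : a ∈ A) : A.image (a * ·) = A :=
  eq_of_subset_of_card_le (image_subset_iff.2 fun b hb ↦ hA a ha b hb)
    (card_image_of_injective _ (mul_right_injective₀ (ne_of_mem_of_not_mem ha hA0))).ge

lemma expSum_mul_of_mem (hA : ∀ a ∈ A, ∀ b ∈ A, a * b ∈ A) (hA0 : 0 ∉ A) {a : F}
    (ha : a ∈ A) (t : F) : expSum ψ A (t * a) = expSum ψ A t := by
  conv_rhs => rw [← image_mul_left_eq_of_mem hA hA0 ha]
  rw [expSum, expSum, sum_image (mul_right_injective₀ (ne_of_mem_of_not_mem ha hA0)).injOn]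
  simp only [mul_assoc]

variable [Fintype F]

lemma norm_expSum_sq_le (hψ : ψ.IsPrimitive) (hA : ∀ a ∈ A, ∀ b ∈ A, a * b ∈ A) (hA0 : 0 ∉ A)
    {t : F} (ht : t ≠ 0) : ‖expSum ψ A t‖ ^ 2 ≤ Fintype.card F - #A := by
  have hnonzero : ∑ s ∈ univ.erase 0, ‖expSum ψ A s‖ ^ 2 = Fintype.card F * #A - #A ^ 2 := by
    have h := sum_norm_expSum_sq hψ A
    rw [← add_sum_erase _ _ (mem_univ 0), expSum_zero, Complex.norm_natCast] at h
    linarith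
  have horbit : ∑ s ∈ A.image (t * ·), ‖expSum ψ A s‖ ^ 2 = #A * ‖expSum ψ A t‖ ^ 2 := by
    rw [sum_image (mul_right_injective₀ ht).injOn,
      sum_congr rfl fun a ha ↦ by rw [expSum_mul_of_mem hA hA0 ha], sum_const, nsmul_eq_mul]
  have hsub : A.image (t * ·) ⊆ univ.erase 0 := image_subset_iff.2 fun a ha ↦
    mem_erase.2 ⟨mul_ne_zero ht (ne_of_mem_of_not_mem ha hA0), mem_univ _⟩
  have h : (#A : ℝ) * ‖expSum ψ A t‖ ^ 2 ≤ #A * (Fintype.card F - #A) := by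
    rw [← horbit]
    nlinarith [sum_le_sum_of_subset_of_nonneg hsub fun s _ _ ↦ sq_nonneg ‖expSum ψ A s‖]
  rcases A.eq_empty_or_nonempty with rfl | hne
  · simp [expSum]
  · exact le_of_mul_le_mul_left h (by positivity)

theorem sq_card_mul_count_sub_le (hψ : ψ.IsPrimitive) (hA : ∀ a ∈ A, ∀ b ∈ A, a * b ∈ A)
    (hA0 : 0 ∉ A) (B C : Finset F) :
    ((Fintype.card F : ℝ) * #{p ∈ B ×ˢ C | p.1 + p.2 ∈ A} - #A * (#B * #C)) ^ 2 ≤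
      (Fintype.card F - #A) * Fintype.card F ^ 2 * (#B * #C) := by
  set E := univ.erase (0 : F)
  have hqA : (0 : ℝ) ≤ Fintype.card F - #A := sub_nonneg.2 (Nat.cast_le.2 (card_le_univ A))
  have hdev : |(Fintype.card F : ℝ) * #{p ∈ B ×ˢ C | p.1 + p.2 ∈ A} - #A * (#B * #C)| ≤
      ∑ t ∈ E, ‖expSum ψ B t‖ * ‖expSum ψ A t‖ * ‖expSum ψ C t‖ := by
    rw [← Real.norm_eq_abs, ← Complex.norm_real, card_mul_count_sub_eq_sum hψ]
    refine (norm_sum_le _ _).trans_eq (sum_congr rfl fun t _ ↦ ?_)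
    rw [norm_mul, norm_mul, Complex.norm_conj]
    ring
  have hBA : ∑ t ∈ E, (‖expSum ψ B t‖ * ‖expSum ψ A t‖) ^ 2 ≤
      (Fintype.card F - #A) * (Fintype.card F * #B) := calc
    _ ≤ ∑ t ∈ E, ‖expSum ψ B t‖ ^ 2 * (Fintype.card F - #A) := sum_le_sum fun t ht ↦ by
      rw [mul_pow]
      exact mul_le_mul_of_nonneg_left (norm_expSum_sq_le hψ hA hA0 (ne_of_mem_erase ht))
        (sq_nonneg _)
    _ ≤ (Fintype.card F - #A) * (Fintype.card F * #B) := by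
      rw [← sum_mul, mul_comm]
      exact mul_le_mul_of_nonneg_left (sum_norm_expSum_sq_le hψ B E) hqA
  calc _ = |(Fintype.card F : ℝ) * #{p ∈ B ×ˢ C | p.1 + p.2 ∈ A} - #A * (#B * #C)| ^ 2 :=
        (sq_abs _).symm
    _ ≤ (∑ t ∈ E, ‖expSum ψ B t‖ * ‖expSum ψ A t‖ * ‖expSum ψ C t‖) ^ 2 :=
      pow_le_pow_left₀ (abs_nonneg _) hdev 2
    _ ≤ (∑ t ∈ E, (‖expSum ψ B t‖ * ‖expSum ψ A t‖) ^ 2) * ∑ t ∈ E, ‖expSum ψ C t‖ ^ 2 :=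
      sum_mul_sq_le_sq_mul_sq _ _ _
    _ ≤ (Fintype.card F - #A) * (Fintype.card F * #B) * (Fintype.card F * #C) :=
      mul_le_mul hBA (sum_norm_expSum_sq_le hψ C E) (sum_nonneg fun _ _ ↦ sq_nonneg _)
        (mul_nonneg hqA (by positivity))
    _ = (Fintype.card F - #A) * Fintype.card F ^ 2 * (#B * #C) := by ring

end Field

theorem exists_add_mem_of_card_pow_three_le {F : Type*} [Field F] [Fintype F] [DecidableEq F]
    {A : Finset F} (hA : ∀ a ∈ A, ∀ b ∈ A, a * b ∈ A) (hA0 : 0 ∉ A) {B C : Finset F}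
    (hBC : Fintype.card F ^ 3 ≤ #A ^ 2 * (#B * #C)) : ∃ x ∈ B, ∃ y ∈ C, x + y ∈ A := by
  obtain ⟨ψ, hψ⟩ := AddChar.exists_apply_ne_zero.2 (one_ne_zero : (1 : F) ≠ 0)
  have hψ : ψ.IsPrimitive := .of_ne_one fun h ↦ hψ (by simp [h])
  by_contra! hno
  have hN : #{p ∈ B ×ˢ C | p.1 + p.2 ∈ A} = 0 := card_eq_zero.2 <| filter_eq_empty_iff.2
    fun p hp ↦ hno _ (mem_product.1 hp).1 _ (mem_product.1 hp).2
  have hdev := sq_card_mul_count_sub_le hψ hA hA0 B C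
  have hBC : (Fintype.card F : ℝ) ^ 3 ≤ #A ^ 2 * (#B * #C) := by exact_mod_cast hBC
  rw [hN, Nat.cast_zero, mul_zero, zero_sub, neg_sq] at hdev
  have hq : (0 : ℝ) < Fintype.card F := by positivity
  have hm : (0 : ℝ) ≤ #B * #C := by positivity
  have hdm : (#A : ℝ) * (#B * #C) ≤ 0 := by
    nlinarith [mul_le_mul_of_nonneg_right hBC hm, pow_pos hq 2]
  nlinarith [mul_le_mul_of_nonneg_left hdm (Nat.cast_nonneg (α := ℝ) #A), pow_pos hq 3]

theorem stmt_18_general (q : ℕ) (hq : q.Prime) (H : Subgroup (ZMod q)ˣ) (d : ℕ)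
    (hd : d = Nat.card H)
    (B C : Finset (ZMod q)) (hBC : q ^ 3 ≤ d ^ 2 * (B.card * C.card)) :
    ∃ x ∈ B, ∃ y ∈ C, ∃ a : (ZMod q)ˣ, a ∈ H ∧ x + y = (a : ZMod q) := by
  have := Fact.mk hq
  classical
  let A : Finset (ZMod q) := (univ.filter (· ∈ H)).map ⟨Units.val, Units.val_injective⟩
  have hmem {x : ZMod q} : x ∈ A ↔ ∃ u ∈ H, (u : ZMod q) = x := by simp [A]
  have hA : #A = d := by simp [A, hd, Nat.card_eq_fintype_card, Fintype.card_subtype]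
  obtain ⟨x, hx, y, hy, hxy⟩ := exists_add_mem_of_card_pow_three_le (A := A) (B := B) (C := C)
    (fun a ha b hb ↦ by
      obtain ⟨u, hu, rfl⟩ := hmem.1 ha
      obtain ⟨v, hv, rfl⟩ := hmem.1 hb
      exact hmem.2 ⟨u * v, H.mul_mem hu hv, rfl⟩)
    (fun h ↦ by obtain ⟨u, -, hu⟩ := hmem.1 h; exact u.ne_zero hu)
    (by rwa [ZMod.card, hA])
  obtain ⟨u, hu, hxy⟩ := hmem.1 hxy
  exact ⟨x, hx, y, hy, u, hu, hxy.symm⟩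

theorem stmt_18 (q : ℕ) (hq : q.Prime) (H : Subgroup (ZMod q)ˣ) (d : ℕ)
    (hd : d = Nat.card H) (hdq : q ≤ d ^ 2)
    (B C : Finset (ZMod q)) (hBC : q ^ 3 ≤ d ^ 2 * (B.card * C.card)) :
    ∃ x ∈ B, ∃ y ∈ C, ∃ a : (ZMod q)ˣ, a ∈ H ∧ x + y = (a : ZMod q) :=
  stmt_18_general q hq H d hd B C hBC
end
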